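/- arXiv:1403.4831 — 2 statements merged into one kernel-verified Lean document; each statement's English description precedes it below -/
import Mathlib

section
/- For every n ≥ 1 and every 1 ≤ i ≤ n, the following identity holds in the integral group algebra ℤ[𝔖_{n+1}]: sh_{n+1} − ∑_{B ⊆ {1,…,n}} D_i(σ_B) = ∑_{A} σ_A, where the right-hand sum ranges over those subsets A ⊆ {1,…,n+1} containing exactly one of the two elements i and i+1. -/
/-!
The shuffle permutation `σ_A` is the unique permutation that sends an initial segment of
positions into `A` and is increasing both on the positions it sends into `A` and on those it
sends outside `A`. The inflation `D_i(σ_B)` inherits these two properties for the set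
`B′_i(B)`, because collapsing the letters `i, i+1` to `i` (and the corresponding two
positions to one) turns it back into `σ_B`; hence `D_i(σ_B) = σ_{B′_i(B)}`. Finally
`B ↦ B′_i(B)` is a bijection onto the subsets containing both or neither of `i, i+1`, so the
inflations cancel exactly those terms of `sh_{n+1}`.
-/

/-- The shuffle permutation `σ_A` associated to a subset `A ⊆ {1,…,n}`:
positions `1,…,|A|` are sent, in order, to the elements of `A` listed increasingly,
and positions `|A|+1,…,n` are sent, in order, to the elements of the complement of `A`
listed increasingly.  (Here everything is 0-indexed, using `Fin n`.) -/
def shufflePerm {n : ℕ} (A : Finset (Fin n)) : Equiv.Perm (Fin n) :=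
  (finCongr (show n = A.card + Aᶜ.card from by
      have h1 : A.card ≤ n := by simpa using Finset.card_le_univ A
      have h2 : Aᶜ.card = n - A.card := by simp [Finset.card_compl]
      omega)).trans <|
  finSumFinEquiv.symm.trans <|
  (Equiv.sumCongr (A.orderIsoOfFin rfl).toEquiv
      ((Aᶜ.orderIsoOfFin rfl).toEquiv.trans
        (Equiv.subtypeEquivRight fun _ => Finset.mem_compl))).trans <|
  Equiv.sumCompl (· ∈ A)

/-- The inflation `D_i(σ) ∈ 𝔖_{n+1}` of a permutation `σ ∈ 𝔖_n`: in the one-line word of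
`σ`, every letter `ℓ > i` is replaced by `ℓ+1` and the letter `i` is replaced by the two
consecutive letters `i, i+1`.  (0-indexed: `i : Fin n`, and the two consecutive letters are
`i.castSucc, i.succ` in `Fin (n+1)`.)  This is the operadic composition `σ ∘_i m_2` in the
associative operad. -/
def inflate {n : ℕ} (σ : Equiv.Perm (Fin n)) (i : Fin n) : Equiv.Perm (Fin (n + 1)) :=
  (finSuccEquiv' ((σ⁻¹ i).succ)).trans ((Equiv.optionCongr σ).trans (finSuccEquiv' i.succ).symm)

/-- The subset `B′_i(B) ⊆ {1,…,n+1}`: elements of `B` below `i` are kept, elements of `B`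
above `i` are shifted up by one, and if `i ∈ B` then both `i` and `i+1` are included.
(0-indexed via `Fin.castSucc` and `Fin.succ`.) -/
def inflateSet {n : ℕ} (B : Finset (Fin n)) (i : Fin n) : Finset (Fin (n + 1)) :=
  ((B.filter (· < i)).image Fin.castSucc) ∪ ((B.filter (i < ·)).image Fin.succ) ∪
    (if i ∈ B then {i.castSucc, i.succ} else ∅)

/-- The shuffle element `sh_n = ∑_{A ⊆ {1,…,n}} σ_A` of the integral group algebra
`ℤ[𝔖_n]`. -/
noncomputable def sh (n : ℕ) : MonoidAlgebra ℤ (Equiv.Perm (Fin n)) :=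
  ∑ A : Finset (Fin n), MonoidAlgebra.of ℤ (Equiv.Perm (Fin n)) (shufflePerm A)

structure IsShuffle {α : Type*} [LinearOrder α] (A : Finset α) (τ : Equiv.Perm α) : Prop where
  isLowerSet : IsLowerSet {k | τ k ∈ A}
  apply_lt_apply : ∀ ⦃k l : α⦄, k < l → (τ k ∈ A ↔ τ l ∈ A) → τ k < τ l

namespace IsShuffle

variable {α : Type*} [LinearOrder α] {A : Finset α} {τ τ' : Equiv.Perm α}

theorem mem_iff_mem [Finite α] (hτ : IsShuffle A τ) (hτ' : IsShuffle A τ') (k : α) :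
    τ k ∈ A ↔ τ' k ∈ A := by
  have hcard (ρ : Equiv.Perm α) : {k | ρ k ∈ A}.ncard = (A : Set α).ncard :=
    Set.ncard_preimage_of_injective_subset_range ρ.injective (by simp)
  suffices {k | τ k ∈ A} = {k | τ' k ∈ A} from Set.ext_iff.mp this k
  rcases hτ.isLowerSet.total hτ'.isLowerSet with h | h
  · exact Set.eq_of_subset_of_ncard_le h (by rw [hcard, hcard])
  · exact (Set.eq_of_subset_of_ncard_le h (by rw [hcard, hcard])).symm

theorem le_of_eqOn_Iio (hτ' : IsShuffle A τ') (hside : ∀ k, τ k ∈ A ↔ τ' k ∈ A) {k : α}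
    (heq : Set.EqOn τ τ' (Set.Iio k)) : τ' k ≤ τ k := by
  by_contra! hlt
  obtain ⟨l, hτ'l⟩ := τ'.surjective (τ k)
  rcases lt_trichotomy l k with hlk | rfl | hkl
  · exact hlk.ne (τ.injective (by rw [heq hlk, hτ'l]))
  · exact hlt.ne hτ'l.symm
  · exact (hτ'.apply_lt_apply hkl (by rw [hτ'l, hside])).not_gt (hτ'l ▸ hlt)

theorem unique [Finite α] (hτ : IsShuffle A τ) (hτ' : IsShuffle A τ') : τ = τ' := by
  have hside := hτ.mem_iff_mem hτ'
  ext1 k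
  induction k using WellFoundedLT.induction with
  | _ k ih =>
    exact le_antisymm (le_of_eqOn_Iio hτ (fun j => (hside j).symm) fun j hj => (ih j hj).symm)
      (le_of_eqOn_Iio hτ' hside ih)

end IsShuffle

section shufflePerm

variable {n : ℕ} (A : Finset (Fin n))

theorem Finset.card_add_card_compl_fin : A.card + Aᶜ.card = n := by
  rw [A.card_add_card_compl, Fintype.card_fin]

theorem shufflePerm_apply_of_lt (k : Fin n) (h : (k : ℕ) < A.card) :
    shufflePerm A k = A.orderEmbOfFin rfl ⟨k, h⟩ := by
  have hs : finSumFinEquiv.symm (finCongr A.card_add_card_compl_fin.symm k) = Sum.inl ⟨k, h⟩ :=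
    finSumFinEquiv.symm_apply_eq.mpr (Fin.ext rfl)
  simp only [shufflePerm, Equiv.trans_apply, hs, Equiv.sumCongr_apply, Sum.map_inl,
    Equiv.sumCompl_apply_inl]
  rfl

theorem shufflePerm_apply_of_le (k : Fin n) (h : A.card ≤ (k : ℕ)) :
    shufflePerm A k =
      Aᶜ.orderEmbOfFin rfl ⟨k - A.card, by have := A.card_add_card_compl_fin; omega⟩ := by
  have hs : finSumFinEquiv.symm (finCongr A.card_add_card_compl_fin.symm k) =
      Sum.inr ⟨k - A.card, by have := A.card_add_card_compl_fin; omega⟩ :=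
    finSumFinEquiv.symm_apply_eq.mpr (Fin.ext (by simp; omega))
  simp only [shufflePerm, Equiv.trans_apply, hs, Equiv.sumCongr_apply, Sum.map_inr,
    Equiv.sumCompl_apply_inr, Equiv.subtypeEquivRight_apply_coe]
  rfl

theorem shufflePerm_mem_iff (k : Fin n) : shufflePerm A k ∈ A ↔ (k : ℕ) < A.card := by
  refine ⟨fun hk => ?_, fun hk => ?_⟩
  · by_contra! hle
    rw [shufflePerm_apply_of_le A k hle] at hk
    exact Finset.mem_compl.mp (Finset.orderEmbOfFin_mem _ _ _) hk
  · rw [shufflePerm_apply_of_lt A k hk]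
    exact Finset.orderEmbOfFin_mem _ _ _

theorem isShuffle_shufflePerm : IsShuffle A (shufflePerm A) where
  isLowerSet k l hkl hl := by
    simp only [Set.mem_ofPred_eq, shufflePerm_mem_iff] at hl ⊢
    exact lt_of_le_of_lt hkl hl
  apply_lt_apply k l hkl hside := by
    rw [shufflePerm_mem_iff, shufflePerm_mem_iff] at hside
    rcases lt_or_ge (l : ℕ) A.card with hl | hl
    · rw [shufflePerm_apply_of_lt A k (hside.mpr hl), shufflePerm_apply_of_lt A l hl]
      exact (A.orderEmbOfFin rfl).strictMono hkl
    · have hk : A.card ≤ (k : ℕ) := not_lt.mp (mt hside.mp (not_lt.mpr hl))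
      rw [shufflePerm_apply_of_le A k hk, shufflePerm_apply_of_le A l hl]
      exact (Aᶜ.orderEmbOfFin rfl).strictMono (Fin.mk_lt_mk.mpr (Nat.sub_lt_sub_right hk hkl))

end shufflePerm

theorem Fin.predAbove_succ_succAbove {n : ℕ} (p i : Fin n) :
    p.predAbove (p.succ.succAbove i) = i := by
  rcases le_or_gt i p with h | h
  · rw [Fin.succAbove_of_castSucc_lt _ _ (Fin.castSucc_lt_succ_iff.mpr h),
      Fin.predAbove_castSucc_of_le _ _ h]
  · rw [Fin.succAbove_of_le_castSucc _ _ (Fin.succ_le_castSucc_iff.mpr h),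
      Fin.predAbove_succ_of_le _ _ h.le]

theorem Fin.eq_castSucc_and_eq_succ_of_predAbove_eq {n : ℕ} {p : Fin n} {k l : Fin (n + 1)}
    (hkl : k < l) (h : p.predAbove k = p.predAbove l) : k = p.castSucc ∧ l = p.succ := by
  simp only [Fin.predAbove, Fin.ext_iff, Fin.lt_def] at h hkl ⊢
  split_ifs at h with hk hl hl <;> simp at h hk hl ⊢ <;> omega

section inflate

variable {n : ℕ} (σ : Equiv.Perm (Fin n)) (i : Fin n)

theorem inflate_apply_succ_symm : inflate σ i (σ⁻¹ i).succ = i.succ := by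
  simp [inflate, finSuccEquiv'_at, finSuccEquiv'_symm_none]

theorem inflate_apply_succAbove (j : Fin n) :
    inflate σ i ((σ⁻¹ i).succ.succAbove j) = i.succ.succAbove (σ j) := by
  simp [inflate, finSuccEquiv'_succAbove, finSuccEquiv'_symm_some]

theorem inflate_apply_castSucc_symm : inflate σ i (σ⁻¹ i).castSucc = i.castSucc := by
  rw [← Fin.succAbove_succ_self, inflate_apply_succAbove, Equiv.Perm.coe_inv,
    Equiv.apply_symm_apply, Fin.succAbove_succ_self]

theorem predAbove_inflate (k : Fin (n + 1)) :
    i.predAbove (inflate σ i k) = σ ((σ⁻¹ i).predAbove k) := by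
  rcases eq_or_ne k (σ⁻¹ i).succ with rfl | hk
  · rw [inflate_apply_succ_symm, Fin.predAbove_succ_self, Fin.predAbove_succ_self]
    exact (σ.apply_symm_apply i).symm
  · obtain ⟨j, rfl⟩ := Fin.exists_succAbove_eq hk
    rw [inflate_apply_succAbove, Fin.predAbove_succ_succAbove, Fin.predAbove_succ_succAbove]

theorem mem_inflateSet {B : Finset (Fin n)} {a : Fin (n + 1)} :
    a ∈ inflateSet B i ↔ i.predAbove a ∈ B := by
  simp only [inflateSet, Finset.mem_union, Finset.mem_image, Finset.mem_filter]
  constructor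
  · rintro ((⟨b, ⟨hb, hbi⟩, rfl⟩ | ⟨b, ⟨hb, hbi⟩, rfl⟩) | ha)
    · rwa [Fin.predAbove_castSucc_of_le _ _ hbi.le]
    · rwa [Fin.predAbove_succ_of_le _ _ hbi.le]
    · split_ifs at ha with hi
      · rcases Finset.mem_insert.mp ha with rfl | ha
        · rwa [Fin.predAbove_castSucc_self]
        · rwa [Finset.mem_singleton.mp ha, Fin.predAbove_succ_self]
      · simp at ha
  · intro ha
    rcases eq_or_ne a i.castSucc with rfl | hne
    · simp_all
    rcases eq_or_ne a i.succ with rfl | hne'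
    · simp_all
    rw [← Fin.succAbove_predAbove hne] at hne' ⊢
    rcases lt_trichotomy (i.predAbove a) i with hlt | heq | hgt
    · rw [Fin.succAbove_castSucc_of_lt _ _ hlt]
      exact Or.inl (Or.inl ⟨_, ⟨ha, hlt⟩, rfl⟩)
    · rw [heq, Fin.succAbove_castSucc_self] at hne'
      exact absurd rfl hne'
    · rw [Fin.succAbove_castSucc_of_le _ _ hgt.le]
      exact Or.inl (Or.inr ⟨_, ⟨ha, hgt⟩, rfl⟩)

theorem IsShuffle.inflate {B : Finset (Fin n)} {σ : Equiv.Perm (Fin n)} (hσ : IsShuffle B σ) :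
    IsShuffle (inflateSet B i) (_root_.inflate σ i) := by
  have hside (k : Fin (n + 1)) :
      _root_.inflate σ i k ∈ inflateSet B i ↔ σ ((σ⁻¹ i).predAbove k) ∈ B := by
    rw [mem_inflateSet, predAbove_inflate]
  refine ⟨fun k l hkl hl => ?_, fun k l hkl hkl_side => ?_⟩
  · simp only [Set.mem_ofPred_eq, hside] at hl ⊢
    exact hσ.isLowerSet (Fin.predAbove_right_monotone _ hkl) hl
  · rw [hside, hside] at hkl_side
    by_contra! hle
    have hpred : σ ((σ⁻¹ i).predAbove l) ≤ σ ((σ⁻¹ i).predAbove k) := by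
      rw [← predAbove_inflate, ← predAbove_inflate]
      exact Fin.predAbove_right_monotone _ hle
    rcases (Fin.predAbove_right_monotone (σ⁻¹ i) hkl.le).lt_or_eq with hlt | heq
    · exact (hσ.apply_lt_apply hlt hkl_side).not_ge hpred
    · obtain ⟨rfl, rfl⟩ := Fin.eq_castSucc_and_eq_succ_of_predAbove_eq hkl heq
      rw [inflate_apply_castSucc_symm, inflate_apply_succ_symm] at hle
      exact hle.not_gt i.castSucc_lt_succ

theorem inflate_shufflePerm (B : Finset (Fin n)) :
    inflate (shufflePerm B) i = shufflePerm (inflateSet B i) :=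
  ((isShuffle_shufflePerm B).inflate i).unique (isShuffle_shufflePerm _)

end inflate

section inflateSet

variable {n : ℕ} (i : Fin n)

theorem inflateSet_injective : Function.Injective (inflateSet · i) := by
  intro B B' h
  ext b
  rw [← Fin.predAbove_succAbove i b, ← mem_inflateSet, ← mem_inflateSet]
  exact Finset.ext_iff.mp h _

theorem image_inflateSet :
    Finset.univ.image (inflateSet · i) =
      Finset.univ.filter (fun A : Finset (Fin (n + 1)) => i.castSucc ∈ A ↔ i.succ ∈ A) := by
  ext A
  simp only [Finset.mem_image, Finset.mem_univ, true_and, Finset.mem_filter]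
  constructor
  · rintro ⟨B, rfl⟩
    rw [mem_inflateSet, mem_inflateSet, Fin.predAbove_castSucc_self, Fin.predAbove_succ_self]
  · intro hA
    refine ⟨Finset.univ.filter (fun b => i.castSucc.succAbove b ∈ A), Finset.ext fun a => ?_⟩
    rw [mem_inflateSet, Finset.mem_filter, and_iff_right (Finset.mem_univ _)]
    rcases eq_or_ne a i.castSucc with rfl | ha
    · rw [Fin.predAbove_castSucc_self, Fin.succAbove_castSucc_self, hA]
    · rw [Fin.succAbove_predAbove ha]

end inflateSet

/-- In `ℤ[𝔖_{n+1}]`: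
`sh_{n+1} − ∑_{B ⊆ {1,…,n}} D_i(σ_B) = ∑_A σ_A`, the sum on the right ranging over those
subsets `A ⊆ {1,…,n+1}` containing exactly one of the two elements `i` and `i+1`. -/
theorem sh_sub_sum_inflate {n : ℕ} (i : Fin n) :
    sh (n + 1) -
        (∑ B : Finset (Fin n),
          MonoidAlgebra.of ℤ (Equiv.Perm (Fin (n + 1))) (inflate (shufflePerm B) i)) =
      ∑ A ∈ Finset.univ.filter (fun A : Finset (Fin (n + 1)) =>
          (i.castSucc ∈ A ∧ i.succ ∉ A) ∨ (i.succ ∈ A ∧ i.castSucc ∉ A)),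
        MonoidAlgebra.of ℤ (Equiv.Perm (Fin (n + 1))) (shufflePerm A) := by
  set of := MonoidAlgebra.of ℤ (Equiv.Perm (Fin (n + 1)))
  have hinflate : ∑ B : Finset (Fin n), of (inflate (shufflePerm B) i) =
      ∑ A ∈ Finset.univ.filter (fun A : Finset (Fin (n + 1)) => i.castSucc ∈ A ↔ i.succ ∈ A),
        of (shufflePerm A) := by
    rw [← image_inflateSet, Finset.sum_image (inflateSet_injective i).injOn]
    simp only [inflate_shufflePerm]
  have hfilter : Finset.univ.filter (fun A : Finset (Fin (n + 1)) =>
      (i.castSucc ∈ A ∧ i.succ ∉ A) ∨ (i.succ ∈ A ∧ i.castSucc ∉ A)) =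
      Finset.univ.filter (fun A => ¬(i.castSucc ∈ A ↔ i.succ ∈ A)) :=
    Finset.filter_congr fun A _ => by tauto
  rw [sh, hinflate, hfilter, ← Finset.sum_filter_add_sum_filter_not Finset.univ
    (fun A : Finset (Fin (n + 1)) => i.castSucc ∈ A ↔ i.succ ∈ A), add_sub_cancel_left]
end

section
/- For every n ≥ 1 and every 1 ≤ i ≤ n, the element X = ∑_{A} σ_A of ℤ[𝔖_{n+1}], where the sum ranges over those subsets A ⊆ {1,…,n+1} containing exactly one of the two elements i and i+1, is invariant under left multiplication by the adjacent transposition t_i = (i, i+1): that is, t_i · X = X in the group algebra ℤ[𝔖_{n+1}]. -/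
lemma shufflePerm_apply_lt {n : ℕ} (A : Finset (Fin n)) (k : Fin n) (h : (k:ℕ) < A.card) :
    shufflePerm A k = A.orderEmbOfFin rfl ⟨k, h⟩ := by
  have : finSumFinEquiv.symm (finCongr (show n = A.card + Aᶜ.card from by
      have h1 : A.card ≤ n := by simpa using Finset.card_le_univ A
      have h2 : Aᶜ.card = n - A.card := by simp [Finset.card_compl]
      omega) k) = Sum.inl ⟨k, h⟩ := by
    rw [show finCongr _ k = Fin.castAdd Aᶜ.card ⟨k, h⟩ from rfl]
    exact finSumFinEquiv_symm_apply_castAdd _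
  simp only [shufflePerm, Equiv.trans_apply, this, Equiv.sumCongr_apply, Sum.map_inl,
    Equiv.sumCompl_apply_inl]
  simp [Finset.coe_orderIsoOfFin_apply]

lemma shufflePerm_apply_ge {n : ℕ} (A : Finset (Fin n)) (k : Fin n) (h : ¬ (k:ℕ) < A.card)
    (h2 : (k:ℕ) - A.card < Aᶜ.card) :
    shufflePerm A k = Aᶜ.orderEmbOfFin rfl ⟨(k:ℕ) - A.card, h2⟩ := by
  have : finSumFinEquiv.symm (finCongr (show n = A.card + Aᶜ.card from by
      have h1 : A.card ≤ n := by simpa using Finset.card_le_univ A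
      have h2 : Aᶜ.card = n - A.card := by simp [Finset.card_compl]
      omega) k) = Sum.inr ⟨(k:ℕ) - A.card, h2⟩ := by
    rw [show finCongr _ k = Fin.natAdd A.card ⟨(k:ℕ) - A.card, h2⟩ from by
      apply Fin.ext; simp; omega]
    exact finSumFinEquiv_symm_apply_natAdd _
  simp only [shufflePerm, Equiv.trans_apply, this, Equiv.sumCongr_apply, Sum.map_inr,
    Equiv.sumCompl_apply_inr, Equiv.subtypeEquivRight_apply, Function.comp_apply]
  simp [Finset.coe_orderIsoOfFin_apply]

lemma mem_image_equiv' {n : ℕ} (A : Finset (Fin n)) (e : Equiv.Perm (Fin n)) (x : Fin n) :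
    x ∈ A.image e ↔ e.symm x ∈ A := by
  constructor
  · rintro h
    rw [Finset.mem_image] at h
    obtain ⟨y, hy, rfl⟩ := h
    simpa using hy
  · intro h
    exact Finset.mem_image.2 ⟨e.symm x, h, by simp⟩

lemma swap_val {n : ℕ} (i : Fin n) (x : Fin (n + 1)) :
    ((Equiv.swap i.castSucc i.succ x : Fin (n + 1)) : ℕ) =
      if (x : ℕ) = (i : ℕ) then (i : ℕ) + 1 else if (x : ℕ) = (i : ℕ) + 1 then (i : ℕ) else x := by
  rcases eq_or_ne x i.castSucc with rfl | h1
  · simp [Equiv.swap_apply_left]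
  rcases eq_or_ne x i.succ with rfl | h2
  · have : ((i.succ : Fin (n+1)) : ℕ) ≠ (i : ℕ) := by simp
    simp [Equiv.swap_apply_right, this]
  · rw [Equiv.swap_apply_of_ne_of_ne h1 h2, if_neg, if_neg]
    · exact fun h => h2 (Fin.ext (by simpa using h))
    · exact fun h => h1 (Fin.ext (by simpa using h))

lemma swap_lt {n : ℕ} (i : Fin n) {A : Finset (Fin (n + 1))}
    (hA : i.castSucc ∉ A ∨ i.succ ∉ A) {a b : Fin (n + 1)}
    (ha : a ∈ A) (hb : b ∈ A) (hab : a < b) :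
    Equiv.swap i.castSucc i.succ a < Equiv.swap i.castSucc i.succ b := by
  have hab' : (a : ℕ) < (b : ℕ) := hab
  have hno : ¬((a : ℕ) = (i : ℕ) ∧ (b : ℕ) = (i : ℕ) + 1) := by
    rintro ⟨h1, h2⟩
    have e1 : a = i.castSucc := Fin.ext (by simpa using h1)
    have e2 : b = i.succ := Fin.ext (by simpa using h2)
    subst e1; subst e2; tauto
  rw [Fin.lt_def, swap_val, swap_val]
  split_ifs <;> omega

lemma swap_mul_shufflePerm {n : ℕ} (i : Fin n) (A : Finset (Fin (n + 1)))
    (hA : (i.castSucc ∈ A ∧ i.succ ∉ A) ∨ (i.succ ∈ A ∧ i.castSucc ∉ A)) :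
    Equiv.swap i.castSucc i.succ * shufflePerm A =
      shufflePerm (A.image (Equiv.swap i.castSucc i.succ)) := by
  set τ : Equiv.Perm (Fin (n + 1)) := Equiv.swap i.castSucc i.succ with hτ
  have hτsymm : τ.symm = τ := Equiv.symm_swap _ _
  have hcard : (A.image τ).card = A.card := Finset.card_image_of_injective _ τ.injective
  have hcompl : (A.image τ)ᶜ = Aᶜ.image τ := by
    ext x
    rw [Finset.mem_compl, mem_image_equiv', mem_image_equiv', Finset.mem_compl]
  have hccard : (A.image τ)ᶜ.card = Aᶜ.card := by
    rw [hcompl]; exact Finset.card_image_of_injective _ τ.injective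
  -- order embeddings
  have hA1 : i.castSucc ∉ A ∨ i.succ ∉ A := by tauto
  have hA2 : i.castSucc ∉ Aᶜ ∨ i.succ ∉ Aᶜ := by
    simp only [Finset.mem_compl, not_not]; tauto
  have hemb : (fun j : Fin (A.image τ).card => τ (A.orderEmbOfFin rfl (Fin.cast hcard j)))
      = (A.image τ).orderEmbOfFin rfl := by
    apply Finset.orderEmbOfFin_unique rfl
    · intro j
      exact Finset.mem_image_of_mem τ (Finset.orderEmbOfFin_mem A rfl _)
    · intro j j' h
      exact swap_lt i hA1 (Finset.orderEmbOfFin_mem A rfl _) (Finset.orderEmbOfFin_mem A rfl _)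
        ((A.orderEmbOfFin rfl).strictMono (by rwa [Fin.lt_def] at h ⊢))
  have hembc : (fun j : Fin (A.image τ)ᶜ.card => τ (Aᶜ.orderEmbOfFin rfl (Fin.cast hccard j)))
      = (A.image τ)ᶜ.orderEmbOfFin rfl := by
    apply Finset.orderEmbOfFin_unique rfl
    · intro j
      rw [Finset.mem_compl, mem_image_equiv']
      simp only [Equiv.symm_apply_apply]
      exact Finset.mem_compl.1 (Finset.orderEmbOfFin_mem Aᶜ rfl _)
    · intro j j' h
      exact swap_lt i hA2 (Finset.orderEmbOfFin_mem Aᶜ rfl _) (Finset.orderEmbOfFin_mem Aᶜ rfl _)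
        ((Aᶜ.orderEmbOfFin rfl).strictMono (by rwa [Fin.lt_def] at h ⊢))
  apply Equiv.ext
  intro k
  rw [Equiv.Perm.mul_apply]
  by_cases h : (k : ℕ) < A.card
  · have h' : (k : ℕ) < (A.image τ).card := by omega
    rw [shufflePerm_apply_lt A k h, shufflePerm_apply_lt (A.image τ) k h']
    exact congrFun hemb ⟨k, h'⟩
  · have h' : ¬ (k : ℕ) < (A.image τ).card := by omega
    have hk2 : (k : ℕ) - A.card < Aᶜ.card := by
      have h1 : A.card + Aᶜ.card = n + 1 := by
        have := Finset.card_compl A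
        have := Finset.card_le_univ A
        simp_all
      omega
    have hk2' : (k : ℕ) - (A.image τ).card < (A.image τ)ᶜ.card := by omega
    rw [shufflePerm_apply_ge A k h hk2, shufflePerm_apply_ge (A.image τ) k h' hk2']
    have := congrFun hembc ⟨(k : ℕ) - (A.image τ).card, hk2'⟩
    rw [← this]
    congr 1
    apply Fin.ext
    simp [hcard]

/-- The element `X = ∑_A σ_A` of `ℤ[𝔖_{n+1}]`, the sum ranging over subsets
`A ⊆ {1,…,n+1}` containing exactly one of `i` and `i+1`, satisfies `t_i · X = X`. -/
theorem swap_mul_sum_shufflePerm {n : ℕ} (i : Fin n) :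
    MonoidAlgebra.of ℤ (Equiv.Perm (Fin (n + 1))) (Equiv.swap i.castSucc i.succ) *
        (∑ A ∈ Finset.univ.filter (fun A : Finset (Fin (n + 1)) =>
            (i.castSucc ∈ A ∧ i.succ ∉ A) ∨ (i.succ ∈ A ∧ i.castSucc ∉ A)),
          MonoidAlgebra.of ℤ (Equiv.Perm (Fin (n + 1))) (shufflePerm A)) =
      ∑ A ∈ Finset.univ.filter (fun A : Finset (Fin (n + 1)) =>
          (i.castSucc ∈ A ∧ i.succ ∉ A) ∨ (i.succ ∈ A ∧ i.castSucc ∉ A)),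
        MonoidAlgebra.of ℤ (Equiv.Perm (Fin (n + 1))) (shufflePerm A) := by
  classical
  rw [Finset.mul_sum]
  set τ : Equiv.Perm (Fin (n + 1)) := Equiv.swap i.castSucc i.succ with hτ
  have hτsymm : τ.symm = τ := Equiv.symm_swap _ _
  have hmemc : ∀ (A : Finset (Fin (n + 1))), i.castSucc ∈ A.image τ ↔ i.succ ∈ A := by
    intro A
    rw [mem_image_equiv', hτsymm, hτ, Equiv.swap_apply_left]
  have hmems : ∀ (A : Finset (Fin (n + 1))), i.succ ∈ A.image τ ↔ i.castSucc ∈ A := by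
    intro A
    rw [mem_image_equiv', hτsymm, hτ, Equiv.swap_apply_right]
  have hinv : ∀ (A : Finset (Fin (n + 1))), (A.image τ).image τ = A := by
    intro A
    rw [Finset.image_image]
    have : ⇑τ ∘ ⇑τ = id := by
      funext x; simp [hτ, Equiv.swap_apply_self]
    rw [this, Finset.image_id]
  refine Finset.sum_bij' (fun A _ => A.image τ) (fun A _ => A.image τ) ?_ ?_ ?_ ?_ ?_
  · intro A hA
    simp only [Finset.mem_filter, Finset.mem_univ, true_and] at hA ⊢
    rw [hmemc, hmems]
    tauto
  · intro A hA
    simp only [Finset.mem_filter, Finset.mem_univ, true_and] at hA ⊢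
    rw [hmemc, hmems]
    tauto
  · intro A _; exact hinv A
  · intro A _; exact hinv A
  · intro A hA
    simp only [Finset.mem_filter, Finset.mem_univ, true_and] at hA
    rw [← map_mul, swap_mul_shufflePerm i A hA]
end
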